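/- Let n, p ∈ ℕ, let A, B ∈ Matrix (Fin n) (Fin n) ℝ, let α, β ∈ ℝ, and let R : ℝ → Matrix (Fin n) (Fin n) ℝ satisfy R(h) = O(h^(p+2)) as h → 0. Then the function h ↦ exp(α·h·A + β·h^(p+1)·B + R(h)) − exp(α·h·A) − β·h^(p+1)·B is O(h^(p+2)) as h → 0. -/

import Mathlib

open Asymptotics NormedSpace Filter
open scoped Topology Nat

section General

variable {𝔸 : Type*} [NormedRing 𝔸] [NormedAlgebra ℝ 𝔸] [CompleteSpace 𝔸]

private lemma pow_sub_pow_norm_le' (X Y : 𝔸) (m : ℕ) :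
    ‖X ^ (m + 1) - Y ^ (m + 1)‖ ≤ ((m : ℝ) + 1) * max ‖X‖ ‖Y‖ ^ m * ‖X - Y‖ := by
  induction m with
  | zero => simp
  | succ m ih =>
    set r := max ‖X‖ ‖Y‖ with hr
    have hX : ‖X‖ ≤ r := le_max_left _ _
    have hY : ‖Y‖ ≤ r := le_max_right _ _
    have hr0 : 0 ≤ r := le_trans (norm_nonneg _) hX
    have hid : X ^ (m + 1 + 1) - Y ^ (m + 1 + 1)
        = X ^ (m + 1) * (X - Y) + (X ^ (m + 1) - Y ^ (m + 1)) * Y := by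
      noncomm_ring
    have h1 : ‖X ^ (m + 1) * (X - Y)‖ ≤ r ^ (m + 1) * ‖X - Y‖ := by
      calc ‖X ^ (m + 1) * (X - Y)‖ ≤ ‖X ^ (m + 1)‖ * ‖X - Y‖ := norm_mul_le _ _
        _ ≤ r ^ (m + 1) * ‖X - Y‖ := by
            gcongr
            calc ‖X ^ (m + 1)‖ ≤ ‖X‖ ^ (m + 1) := norm_pow_le' X (Nat.succ_pos m)
              _ ≤ r ^ (m + 1) := by gcongr
    have h2 : ‖(X ^ (m + 1) - Y ^ (m + 1)) * Y‖ ≤ ((m : ℝ) + 1) * r ^ m * ‖X - Y‖ * r := by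
      calc ‖(X ^ (m + 1) - Y ^ (m + 1)) * Y‖ ≤ ‖X ^ (m + 1) - Y ^ (m + 1)‖ * ‖Y‖ :=
            norm_mul_le _ _
        _ ≤ ((m : ℝ) + 1) * r ^ m * ‖X - Y‖ * r := by
            apply mul_le_mul ih hY (norm_nonneg _)
            positivity
    calc ‖X ^ (m + 1 + 1) - Y ^ (m + 1 + 1)‖
        ≤ ‖X ^ (m + 1) * (X - Y)‖ + ‖(X ^ (m + 1) - Y ^ (m + 1)) * Y‖ := by
          rw [hid]; exact norm_add_le _ _
      _ ≤ r ^ (m + 1) * ‖X - Y‖ + ((m : ℝ) + 1) * r ^ m * ‖X - Y‖ * r := add_le_add h1 h2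
      _ = ((m : ℝ) + 1 + 1) * r ^ (m + 1) * ‖X - Y‖ := by ring
      _ = (((m + 1 : ℕ) : ℝ) + 1) * r ^ (m + 1) * ‖X - Y‖ := by push_cast; ring

private lemma exp_sub_exp_sub_norm_le (X Y : 𝔸) :
    ‖exp X - exp Y - (X - Y)‖
      ≤ ‖X - Y‖ * max ‖X‖ ‖Y‖ * Real.exp (max ‖X‖ ‖Y‖) := by
  set r := max ‖X‖ ‖Y‖ with hrdef
  set d := ‖X - Y‖ with hddef
  have hr0 : 0 ≤ r := le_trans (norm_nonneg X) (le_max_left _ _)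
  have hd0 : 0 ≤ d := norm_nonneg _
  set g : ℕ → 𝔸 := fun k => ((k ! : ℝ))⁻¹ • (X ^ k - Y ^ k) with hg
  have hsX : Summable fun k : ℕ => ((k ! : ℝ))⁻¹ • X ^ k := expSeries_summable' (𝕂 := ℝ) X
  have hsY : Summable fun k : ℕ => ((k ! : ℝ))⁻¹ • Y ^ k := expSeries_summable' (𝕂 := ℝ) Y
  have hgs : Summable g := by
    have := hsX.sub hsY
    simpa [hg, smul_sub] using this
  have hsum : exp X - exp Y = ∑' k, g k := by
    simp only [exp_eq_tsum (𝕂 := ℝ)]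
    rw [← Summable.tsum_sub hsX hsY]
    simp [hg, smul_sub]
  have hgs1 : Summable fun k => g (k + 1) := by
    exact hgs.comp_injective (add_left_injective 1)
  have hgs2 : Summable fun k => g (k + 2) := by
    exact hgs.comp_injective (add_left_injective 2)
  have hkey : exp X - exp Y - (X - Y) = ∑' k, g (k + 2) := by
    have h0 : ∑' k, g k = g 0 + ∑' k, g (k + 1) := Summable.tsum_eq_zero_add hgs
    have h1 : ∑' k, g (k + 1) = g 1 + ∑' k, g (k + 2) := Summable.tsum_eq_zero_add hgs1
    have hg0 : g 0 = 0 := by simp [hg]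
    have hg1 : g 1 = X - Y := by simp [hg]
    rw [hsum, h0, h1, hg0, hg1]
    abel
  -- termwise bound
  have hterm : ∀ k : ℕ, ‖g (k + 2)‖ ≤ d * r * (r ^ k / k !) := by
    intro k
    have hfac : ((k + 2) * k ! : ℕ) ≤ (k + 2)! := by
      rw [Nat.factorial_succ]
      exact Nat.mul_le_mul_left _ (Nat.factorial_le (Nat.le_succ k))
    have hfrac : (((k : ℝ) + 2)) * (((k + 2)! : ℕ) : ℝ)⁻¹ ≤ ((k ! : ℕ) : ℝ)⁻¹ := by
      rw [mul_inv_le_iff₀ (by positivity), inv_mul_eq_div, le_div_iff₀ (by positivity)]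
      calc ((k : ℝ) + 2) * (k ! : ℕ) = (((k + 2) * k ! : ℕ) : ℝ) := by push_cast; ring
        _ ≤ (((k + 2)! : ℕ) : ℝ) := by exact_mod_cast hfac
    have hpow := pow_sub_pow_norm_le' X Y (k + 1)
    calc ‖g (k + 2)‖ = (((k + 2)! : ℕ) : ℝ)⁻¹ * ‖X ^ (k + 2) - Y ^ (k + 2)‖ := by
          rw [hg]
          rw [norm_smul, Real.norm_eq_abs, abs_inv, Nat.abs_cast]
      _ ≤ (((k + 2)! : ℕ) : ℝ)⁻¹ * ((((k + 1 : ℕ) : ℝ) + 1) * r ^ (k + 1) * d) := by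
          gcongr
      _ = (((k : ℝ) + 2) * (((k + 2)! : ℕ) : ℝ)⁻¹) * (r ^ (k + 1) * d) := by
          push_cast; ring
      _ ≤ ((k ! : ℕ) : ℝ)⁻¹ * (r ^ (k + 1) * d) := by
          gcongr
      _ = d * r * (r ^ k / k !) := by
          rw [pow_succ]
          field_simp
  have hbsum : Summable fun k : ℕ => d * r * (r ^ k / k !) :=
    (Real.summable_pow_div_factorial r).mul_left _
  have hns : Summable fun k => ‖g (k + 2)‖ :=
    Summable.of_nonneg_of_le (fun k => norm_nonneg _) hterm hbsum
  have hexp : ∑' k : ℕ, (r ^ k / k ! : ℝ) = Real.exp r := by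
    rw [Real.exp_eq_exp_ℝ, exp_eq_tsum_div]
  calc ‖exp X - exp Y - (X - Y)‖ = ‖∑' k, g (k + 2)‖ := by rw [hkey]
    _ ≤ ∑' k, ‖g (k + 2)‖ := norm_tsum_le_tsum_norm hns
    _ ≤ ∑' k : ℕ, d * r * (r ^ k / k !) := Summable.tsum_le_tsum hterm hns hbsum
    _ = d * r * Real.exp r := by rw [tsum_mul_left, hexp]

private lemma pow_isBigO_pow {a b : ℕ} (hab : a ≤ b) :
    (fun h : ℝ => h ^ b) =O[𝓝 (0 : ℝ)] fun h : ℝ => h ^ a := by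
  refine IsBigO.of_bound 1 ?_
  filter_upwards [Metric.ball_mem_nhds (0 : ℝ) one_pos] with h hh
  have h1 : |h| ≤ 1 := le_of_lt (by simpa [Real.dist_eq] using hh)
  simp only [Real.norm_eq_abs, abs_pow, one_mul]
  exact pow_le_pow_of_le_one (abs_nonneg h) h1 hab

private lemma exp_asymp (q : ℕ) (X Y : ℝ → 𝔸)
    (hX : X =O[𝓝 (0 : ℝ)] fun h : ℝ => h) (hY : Y =O[𝓝 (0 : ℝ)] fun h : ℝ => h)
    (hd : (fun h => X h - Y h) =O[𝓝 (0 : ℝ)] fun h : ℝ => h ^ (q + 1)) :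
    (fun h => exp (X h) - exp (Y h) - (X h - Y h))
      =O[𝓝 (0 : ℝ)] fun h : ℝ => h ^ (q + 2) := by
  have h1 : (fun h => exp (X h) - exp (Y h) - (X h - Y h)) =O[𝓝 (0 : ℝ)]
      fun h => ‖X h - Y h‖ * max ‖X h‖ ‖Y h‖ * Real.exp (max ‖X h‖ ‖Y h‖) := by
    refine isBigO_of_le _ fun h => ?_
    rw [Real.norm_eq_abs, abs_of_nonneg (by positivity)]
    exact exp_sub_exp_sub_norm_le (X h) (Y h)
  refine h1.trans ?_
  have h2 : (fun h => ‖X h - Y h‖) =O[𝓝 (0 : ℝ)] fun h : ℝ => h ^ (q + 1) := hd.norm_left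
  have h3 : (fun h => max ‖X h‖ ‖Y h‖) =O[𝓝 (0 : ℝ)] fun h : ℝ => h := by
    refine IsBigO.trans (isBigO_of_le _ fun h => ?_) (hX.norm_left.add hY.norm_left)
    have hle : max ‖X h‖ ‖Y h‖ ≤ ‖X h‖ + ‖Y h‖ :=
      max_le (le_add_of_nonneg_right (norm_nonneg _)) (le_add_of_nonneg_left (norm_nonneg _))
    rw [Real.norm_eq_abs, Real.norm_eq_abs, abs_of_nonneg (le_max_of_le_left (norm_nonneg _)),
      abs_of_nonneg (by positivity)]
    exact hle
  have tX : Tendsto X (𝓝 (0 : ℝ)) (𝓝 0) := hX.trans_tendsto tendsto_id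
  have tY : Tendsto Y (𝓝 (0 : ℝ)) (𝓝 0) := hY.trans_tendsto tendsto_id
  have tr : Tendsto (fun h => max ‖X h‖ ‖Y h‖) (𝓝 (0 : ℝ)) (𝓝 0) := by
    simpa using tX.norm.max tY.norm
  have h4 : (fun h => Real.exp (max ‖X h‖ ‖Y h‖)) =O[𝓝 (0 : ℝ)] (fun _ : ℝ => (1 : ℝ)) := by
    have : Tendsto (fun h => Real.exp (max ‖X h‖ ‖Y h‖)) (𝓝 (0 : ℝ)) (𝓝 (Real.exp 0)) :=
      (Real.continuous_exp.tendsto 0).comp tr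
    exact this.isBigO_one ℝ
  have := (h2.mul h3).mul h4
  have heq : (fun h : ℝ => h ^ (q + 1) * h * 1) = fun h : ℝ => h ^ (q + 2) := by
    funext h; rw [mul_one, ← pow_succ]
  rwa [heq] at this

end General

section MatLinfty

variable {n : ℕ}

attribute [local instance] Matrix.linftyOpNormedAddCommGroup Matrix.linftyOpNormedRing
  Matrix.linftyOpNormedAlgebra

private lemma linfty_entry_le (M : Matrix (Fin n) (Fin n) ℝ) (i j : Fin n) :
    |M i j| ≤ ‖M‖ := by
  have h : ‖M i j‖₊ ≤ ‖M‖₊ := by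
    rw [Matrix.linfty_opNNNorm_def]
    exact le_trans
      (Finset.single_le_sum (f := fun j => ‖M i j‖₊) (fun _ _ => zero_le) (Finset.mem_univ j))
      (Finset.le_sup (f := fun i => ∑ j, ‖M i j‖₊) (Finset.mem_univ i))
  rw [← Real.norm_eq_abs]
  exact_mod_cast h

private lemma linfty_norm_le_sum (M : Matrix (Fin n) (Fin n) ℝ) :
    ‖M‖ ≤ ∑ i, ∑ j, |M i j| := by
  have h : ‖M‖₊ ≤ ∑ i, ∑ j, ‖M i j‖₊ := by
    rw [Matrix.linfty_opNNNorm_def]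
    exact Finset.sup_le fun i _ =>
      Finset.single_le_sum (f := fun i => ∑ j, ‖M i j‖₊) (fun _ _ => zero_le)
        (Finset.mem_univ i)
  simp only [← Real.norm_eq_abs]
  have := NNReal.coe_le_coe.mpr h
  simpa [NNReal.coe_sum] using this

private lemma entries_of_isBigO {F : ℝ → Matrix (Fin n) (Fin n) ℝ} {g : ℝ → ℝ}
    (hF : ∀ i j, (fun h : ℝ => F h i j) =O[𝓝 (0 : ℝ)] g) :
    F =O[𝓝 (0 : ℝ)] g := by
  have hsum : (fun h => ∑ i, ∑ j, |F h i j|) =O[𝓝 (0 : ℝ)] g := by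
    refine IsBigO.fun_sum fun i _ => IsBigO.fun_sum fun j _ => ?_
    simpa [Real.norm_eq_abs] using (hF i j).norm_left
  refine IsBigO.trans (isBigO_of_le _ fun h => ?_) hsum
  rw [Real.norm_eq_abs (∑ _, _), abs_of_nonneg (by positivity)]
  exact linfty_norm_le_sum (F h)

private lemma matrix_entries (p : ℕ) (A B : Matrix (Fin n) (Fin n) ℝ) (α β : ℝ)
    (R : ℝ → Matrix (Fin n) (Fin n) ℝ)
    (hR : ∀ i j, (fun h : ℝ => R h i j) =O[𝓝 (0 : ℝ)] fun h : ℝ => h ^ (p + 2))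
    (i j : Fin n) :
    (fun h : ℝ =>
        (exp ((α * h) • A + (β * h ^ (p + 1)) • B + R h)
          - exp ((α * h) • A) - (β * h ^ (p + 1)) • B) i j)
      =O[𝓝 (0 : ℝ)] fun h : ℝ => h ^ (p + 2) := by
  have hR' : R =O[𝓝 (0 : ℝ)] fun h : ℝ => h ^ (p + 2) := entries_of_isBigO hR
  set M : ℝ → Matrix (Fin n) (Fin n) ℝ :=
    fun h => (α * h) • A + (β * h ^ (p + 1)) • B + R h with hM
  set Y : ℝ → Matrix (Fin n) (Fin n) ℝ := fun h => (α * h) • A with hY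
  have hA : Y =O[𝓝 (0 : ℝ)] fun h : ℝ => h := by
    refine IsBigO.of_bound (‖A‖ * |α|) (Eventually.of_forall fun h => ?_)
    rw [hY]
    simp only [norm_smul, Real.norm_eq_abs, abs_mul]
    apply le_of_eq; ring
  have hB : (fun h : ℝ => (β * h ^ (p + 1)) • B) =O[𝓝 (0 : ℝ)] fun h : ℝ => h ^ (p + 1) := by
    refine IsBigO.of_bound (‖B‖ * |β|) (Eventually.of_forall fun h => ?_)
    simp only [norm_smul, Real.norm_eq_abs, abs_mul, abs_pow]
    apply le_of_eq; ring
  have hRp1 : R =O[𝓝 (0 : ℝ)] fun h : ℝ => h ^ (p + 1) :=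
    hR'.trans (pow_isBigO_pow (by omega))
  have hMO : M =O[𝓝 (0 : ℝ)] fun h : ℝ => h := by
    have h1 : (fun h : ℝ => h ^ (p + 1)) =O[𝓝 (0 : ℝ)] fun h : ℝ => h := by
      simpa using pow_isBigO_pow (a := 1) (b := p + 1) (by omega)
    exact (hA.add ((hB.trans h1))).add (hRp1.trans h1)
  have hdiff : (fun h => M h - Y h) =O[𝓝 (0 : ℝ)] fun h : ℝ => h ^ (p + 1) := by
    have heq : (fun h => M h - Y h) = fun h => (β * h ^ (p + 1)) • B + R h := by
      funext h; rw [hM, hY]; beta_reduce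
      generalize (α * h) • A = a; generalize (β * h ^ (p + 1)) • B = b; abel
    rw [heq]
    exact hB.add hRp1
  have hG := exp_asymp p M Y hMO hA hdiff
  have hT : (fun h : ℝ =>
      exp (M h) - exp (Y h) - (β * h ^ (p + 1)) • B) =O[𝓝 (0 : ℝ)]
      fun h : ℝ => h ^ (p + 2) := by
    have heq : (fun h : ℝ => exp (M h) - exp (Y h) - (β * h ^ (p + 1)) • B)
        = fun h => (exp (M h) - exp (Y h) - (M h - Y h)) + R h := by
      funext h
      rw [hM, hY]; beta_reduce
      generalize (α * h) • A = a; generalize (β * h ^ (p + 1)) • B = b; abel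
    rw [heq]
    exact hG.add hR'
  refine IsBigO.trans (isBigO_of_le _ fun h => ?_) hT
  rw [Real.norm_eq_abs]
  exact linfty_entry_le _ i j

end MatLinfty

attribute [local instance] Matrix.normedAddCommGroup

private lemma sup_norm_le_sum {n : ℕ} (M : Matrix (Fin n) (Fin n) ℝ) :
    ‖M‖ ≤ ∑ i, ∑ j, |M i j| := by
  refine (Matrix.norm_le_iff (by positivity)).mpr fun i j => ?_
  calc ‖M i j‖ = |M i j| := Real.norm_eq_abs _
    _ ≤ ∑ j', |M i j'| :=
      Finset.single_le_sum (f := fun j' => |M i j'|) (fun _ _ => abs_nonneg _)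
        (Finset.mem_univ j)
    _ ≤ ∑ i', ∑ j', |M i' j'| :=
      Finset.single_le_sum (f := fun i' => ∑ j', |M i' j'|)
        (fun _ _ => Finset.sum_nonneg fun _ _ => abs_nonneg _) (Finset.mem_univ i)

theorem stmt0 (n p : ℕ) (A B : Matrix (Fin n) (Fin n) ℝ) (α β : ℝ)
    (R : ℝ → Matrix (Fin n) (Fin n) ℝ)
    (hR : R =O[𝓝 (0 : ℝ)] fun h : ℝ => h ^ (p + 2)) :
    (fun h : ℝ =>
        exp ((α * h) • A + (β * h ^ (p + 1)) • B + R h)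
          - exp ((α * h) • A) - (β * h ^ (p + 1)) • B)
      =O[𝓝 (0 : ℝ)] fun h : ℝ => h ^ (p + 2) := by
  have hRentry : ∀ i j, (fun h : ℝ => R h i j) =O[𝓝 (0 : ℝ)] fun h : ℝ => h ^ (p + 2) :=
    fun i j =>
      (isBigO_of_le _ fun h => Matrix.norm_entry_le_entrywise_sup_norm (R h)).trans hR
  have hentries := matrix_entries p A B α β R hRentry
  have hsum : (fun h : ℝ => ∑ i, ∑ j,
      |(exp ((α * h) • A + (β * h ^ (p + 1)) • B + R h)
          - exp ((α * h) • A) - (β * h ^ (p + 1)) • B) i j|)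
      =O[𝓝 (0 : ℝ)] fun h : ℝ => h ^ (p + 2) := by
    refine IsBigO.fun_sum fun i _ => IsBigO.fun_sum fun j _ => ?_
    simpa [Real.norm_eq_abs] using (hentries i j).norm_left
  refine IsBigO.trans (isBigO_of_le _ fun h => ?_) hsum
  rw [Real.norm_eq_abs (∑ _, _), abs_of_nonneg (by positivity)]
  exact sup_norm_le_sum _
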